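/- Let d ≥ 1 be an integer and let α > 0, ν > 0, t > 0, and 0 < ℓ < α. Then the function (s, ξ) ↦ |ξ|^{ℓ−d} exp(−ν s |ξ|^α) is integrable on (0,t) × ℝ^d and ∫_0^t ∫_{ℝ^d} |ξ|^{ℓ−d} exp(−ν s |ξ|^α) dξ ds = (2 π^{d/2} Γ(ℓ/α)) / (Γ(d/2) ν^{ℓ/α} (α − ℓ)) · t^{1−ℓ/α}. -/

import Mathlib

open MeasureTheory Set

open Real Measure




lemma aux_integrableOn_rpow_mul_exp {p q b : ℝ} (hp : 0 < p) (hq : -1 < q) (hb : 0 < b) :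
    IntegrableOn (fun x : ℝ => x ^ q * Real.exp (-b * x ^ p)) (Ioi 0) := by
  have hs : 0 < (q + 1) / p := div_pos (by linarith) hp
  set e : ℝ := (q + 1) / p - 1 with he
  have h1 : IntegrableOn (fun y : ℝ => Real.exp (-(b * y)) * (b * y) ^ e) (Ioi 0) := by
    have := (integrableOn_Ioi_comp_mul_left_iff
      (fun x : ℝ => Real.exp (-x) * x ^ e) 0 hb).2 ?_
    · simpa using this
    · simpa using Real.GammaIntegral_convergent hs
  have h2 : IntegrableOn (fun y : ℝ => y ^ e * Real.exp (-b * y)) (Ioi 0) := by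
    refine IntegrableOn.congr_fun (h1.const_mul (b ^ (-e))) (fun y hy => ?_) measurableSet_Ioi
    have hy' : (0:ℝ) < y := hy
    have hbe : b ^ (-e) * b ^ e = 1 := by rw [← Real.rpow_add hb]; simp
    rw [Real.mul_rpow hb.le hy'.le, neg_mul]
    calc b ^ (-e) * (Real.exp (-(b * y)) * (b ^ e * y ^ e))
        = (b ^ (-e) * b ^ e) * (y ^ e * Real.exp (-(b * y))) := by ring
      _ = y ^ e * Real.exp (-(b * y)) := by rw [hbe, one_mul]
  have := (integrableOn_Ioi_comp_rpow_iff'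
    (fun y : ℝ => y ^ e * Real.exp (-b * y)) (ne_of_gt hp)).2 h2
  refine IntegrableOn.congr_fun this (fun x hx => ?_) measurableSet_Ioi
  have hx' : (0:ℝ) < x := hx
  simp only [smul_eq_mul]
  rw [← mul_assoc, ← Real.rpow_mul hx'.le, ← Real.rpow_add hx', he]
  congr 2
  field_simp
  ring



lemma aux_integrable_fun_norm {E : Type*} [NormedAddCommGroup E] [NormedSpace ℝ E]
    [MeasurableSpace E] [BorelSpace E] [FiniteDimensional ℝ E] [Nontrivial E]
    (μ : Measure E) [μ.IsAddHaarMeasure] {g : ℝ → ℝ} (hg : Measurable g)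
    (h : IntegrableOn (fun r : ℝ => r ^ (Module.finrank ℝ E - 1) * g r) (Ioi 0)) :
    Integrable (fun x : E => g ‖x‖) μ := by
  set n := Module.finrank ℝ E - 1 with hn
  -- Step E: integrability wrt volumeIoiPow
  have hE : Integrable (fun r : Ioi (0:ℝ) => g r.1) (Measure.volumeIoiPow n) := by
    rw [Measure.volumeIoiPow, integrable_withDensity_iff (by fun_prop)
      (Filter.Eventually.of_forall fun r => ENNReal.ofReal_lt_top)]
    have : (fun r : Ioi (0:ℝ) => g r.1 * (ENNReal.ofReal (r.1 ^ n)).toReal)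
        = (fun r : ℝ => g r * r ^ n) ∘ Subtype.val := by
      funext r
      simp [ENNReal.toReal_ofReal (pow_nonneg (le_of_lt r.2) n)]
    rw [this, ← (MeasurableEmbedding.subtype_coe measurableSet_Ioi).integrable_map_iff,
      map_comap_subtype_coe measurableSet_Ioi]
    exact h.congr_fun (fun r hr => by ring) measurableSet_Ioi
  -- Step D: lift to product
  have hD : Integrable (fun p : Metric.sphere (0:E) 1 × Ioi (0:ℝ) => g p.2.1)
      (μ.toSphere.prod (Measure.volumeIoiPow n)) := by
    have hmap : Measure.map Prod.snd (μ.toSphere.prod (Measure.volumeIoiPow n))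
        = (μ.toSphere univ) • (Measure.volumeIoiPow n) := Measure.map_snd_prod
    have hmeas : AEStronglyMeasurable (fun r : Ioi (0:ℝ) => g r.1)
        (Measure.map Prod.snd (μ.toSphere.prod (Measure.volumeIoiPow n))) :=
      (hg.comp measurable_subtype_coe).aestronglyMeasurable
    have := (integrable_map_measure hmeas measurable_snd.aemeasurable).mp ?_
    · exact this
    · rw [hmap]
      refine hE.smul_measure ?_
      exact measure_lt_top _ _ |>.ne
  -- Step C: pull back along measure preserving homeomorphism
  have hC : Integrable (fun x : ({0}ᶜ : Set E) => g ‖x.1‖) (μ.comap Subtype.val) := by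
    have mp := μ.measurePreserving_homeomorphUnitSphereProd
    have := (mp.integrable_comp_emb (Homeomorph.measurableEmbedding _)).2 hD
    convert this using 2 with x
    simp [homeomorphUnitSphereProd]
  -- Step B + A
  have h0 : MeasurableSet ({(0:E)}ᶜ) := (measurableSet_singleton 0).compl
  have hB : IntegrableOn (fun x : E => g ‖x‖) ({0}ᶜ) μ := by
    rw [IntegrableOn, ← map_comap_subtype_coe h0,
      (MeasurableEmbedding.subtype_coe h0).integrable_map_iff]
    exact hC
  rwa [IntegrableOn, restrict_compl_singleton] at hB



section
variable (d : ℕ) (hd : 1 ≤ d) (α c ℓ : ℝ)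

lemma aux_radial (hα : 0 < α) (hc : 0 < c) (hℓ : 0 < ℓ) (hd : 1 ≤ d) :
    IntegrableOn (fun r : ℝ => r ^ (d - 1) *
      (r ^ (ℓ - (d : ℝ)) * Real.exp (-c * r ^ α))) (Ioi 0) := by
  have h := aux_integrableOn_rpow_mul_exp hα (by linarith : (-1:ℝ) < ℓ - 1) hc
  refine h.congr_fun (fun r hr => ?_) measurableSet_Ioi
  have hr' : (0:ℝ) < r := hr
  rw [← mul_assoc, ← Real.rpow_natCast r (d-1), ← Real.rpow_add hr']
  congr 2
  rw [Nat.cast_sub hd]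
  push_cast
  ring

lemma aux_inner_integrable (hα : 0 < α) (hc : 0 < c) (hℓ : 0 < ℓ) (hd : 1 ≤ d) :
    Integrable (fun ξ : EuclideanSpace ℝ (Fin d) =>
      ‖ξ‖ ^ (ℓ - (d : ℝ)) * Real.exp (-c * ‖ξ‖ ^ α)) := by
  haveI : Nonempty (Fin d) := ⟨⟨0, hd⟩⟩
  have hfr : Module.finrank ℝ (EuclideanSpace ℝ (Fin d)) = d := finrank_euclideanSpace_fin
  refine aux_integrable_fun_norm volume (g := fun r => r ^ (ℓ - (d:ℝ)) * Real.exp (-c * r ^ α))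
    ?_ ?_
  · fun_prop
  · rw [hfr]
    exact aux_radial d α c ℓ hα hc hℓ hd

lemma aux_inner_value (hα : 0 < α) (hc : 0 < c) (hℓ : 0 < ℓ) (hd : 1 ≤ d) :
    ∫ ξ : EuclideanSpace ℝ (Fin d), ‖ξ‖ ^ (ℓ - (d : ℝ)) * Real.exp (-c * ‖ξ‖ ^ α)
      = (2 * Real.pi ^ ((d:ℝ)/2) / Real.Gamma ((d:ℝ)/2)) *
        (c ^ (-(ℓ/α)) * (1/α) * Real.Gamma (ℓ/α)) := by
  haveI : Nonempty (Fin d) := ⟨⟨0, hd⟩⟩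
  have hfr : Module.finrank ℝ (EuclideanSpace ℝ (Fin d)) = d := finrank_euclideanSpace_fin
  have key := integral_fun_norm_addHaar (volume : Measure (EuclideanSpace ℝ (Fin d)))
    (fun r => r ^ (ℓ - (d:ℝ)) * Real.exp (-c * r ^ α))
  rw [hfr] at key
  rw [key]
  -- radial integral value
  have hrad : ∫ y in Ioi (0:ℝ), y ^ (d - 1) • (y ^ (ℓ - (d:ℝ)) * Real.exp (-c * y ^ α))
      = c ^ (-(ℓ/α)) * (1/α) * Real.Gamma (ℓ/α) := by
    rw [setIntegral_congr_fun measurableSet_Ioi (g := fun y : ℝ => y ^ (ℓ-1) * Real.exp (-c * y ^ α))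
      (fun y hy => ?_)]
    · have := integral_rpow_mul_exp_neg_mul_rpow hα (by linarith : (-1:ℝ) < ℓ - 1) hc
      rw [this, show ℓ - 1 + 1 = ℓ by ring, neg_div]
    · have hy' : (0:ℝ) < y := hy
      simp only [smul_eq_mul]
      rw [← mul_assoc, ← Real.rpow_natCast y (d-1), ← Real.rpow_add hy']
      congr 2
      rw [Nat.cast_sub hd]
      push_cast
      ring
  rw [hrad]
  -- ball volume
  have hball : (volume (Metric.ball (0 : EuclideanSpace ℝ (Fin d)) 1)).toReal
      = Real.sqrt Real.pi ^ d / Real.Gamma ((d:ℝ)/2 + 1) := by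
    rw [EuclideanSpace.volume_ball]
    simp [Fintype.card_fin, ENNReal.toReal_ofReal
      (by positivity : (0:ℝ) ≤ Real.sqrt Real.pi ^ d / Real.Gamma ((d:ℝ)/2 + 1))]
  rw [measureReal_def, hball]
  have hsqrt : Real.sqrt Real.pi ^ d = Real.pi ^ ((d:ℝ)/2) := by
    rw [Real.sqrt_eq_rpow, ← Real.rpow_natCast (Real.pi ^ ((1:ℝ)/2)) d,
      ← Real.rpow_mul Real.pi_pos.le]
    norm_num
    ring_nf
  have hΓ : Real.Gamma ((d:ℝ)/2 + 1) = ((d:ℝ)/2) * Real.Gamma ((d:ℝ)/2) := by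
    have h0 : (0:ℝ) < (d:ℝ) := by exact_mod_cast hd
    exact Real.Gamma_add_one (by positivity)
  have hΓpos : 0 < Real.Gamma ((d:ℝ)/2) := by
    have h0 : (0:ℝ) < (d:ℝ) := by exact_mod_cast hd
    exact Real.Gamma_pos_of_pos (by positivity)
  have h0 : (0:ℝ) < (d:ℝ) := by exact_mod_cast hd
  rw [hsqrt, hΓ, nsmul_eq_mul, smul_eq_mul]
  field_simp
end

/-- Explicit second moment of the solution to the stochastic heat equation
(`β = 1`, `γ = 0`, `H = 1/2`) with Riesz-type spatial covariance of index `ℓ`. -/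
theorem stmt_4 (d : ℕ) (hd : 1 ≤ d) (α ν t ℓ : ℝ)
    (hα : 0 < α) (hν : 0 < ν) (ht : 0 < t)
    (hℓ₁ : 0 < ℓ) (hℓ₂ : ℓ < α) :
    IntegrableOn
      (fun p : ℝ × EuclideanSpace ℝ (Fin d) =>
        ‖p.2‖ ^ (ℓ - (d : ℝ)) * Real.exp (-ν * p.1 * ‖p.2‖ ^ α))
      (Ioo (0 : ℝ) t ×ˢ (univ : Set (EuclideanSpace ℝ (Fin d)))) ∧
    (∫ s in Ioo (0 : ℝ) t, ∫ ξ : EuclideanSpace ℝ (Fin d),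
        ‖ξ‖ ^ (ℓ - (d : ℝ)) * Real.exp (-ν * s * ‖ξ‖ ^ α))
      = 2 * Real.pi ^ ((d : ℝ) / 2) * Real.Gamma (ℓ / α) /
          (Real.Gamma ((d : ℝ) / 2) * ν ^ (ℓ / α) * (α - ℓ)) * t ^ (1 - ℓ / α) := by
  haveI : Nonempty (Fin d) := ⟨⟨0, hd⟩⟩
  set e : ℝ := ℓ / α with he
  have hα' : α ≠ 0 := ne_of_gt hα
  have he1 : e < 1 := (div_lt_one hα).2 hℓ₂
  have he0 : 0 < e := div_pos hℓ₁ hα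
  set C : ℝ := (2 * Real.pi ^ ((d:ℝ)/2) / Real.Gamma ((d:ℝ)/2)) *
      (ν ^ (-e) * (1/α) * Real.Gamma e) with hC
  -- inner value as function of s, for s > 0
  have hinner : ∀ s : ℝ, 0 < s →
      (∫ ξ : EuclideanSpace ℝ (Fin d), ‖ξ‖ ^ (ℓ - (d:ℝ)) * Real.exp (-ν * s * ‖ξ‖ ^ α))
        = C * s ^ (-e) := by
    intro s hs
    have hc : 0 < ν * s := mul_pos hν hs
    have := aux_inner_value d α (ν * s) ℓ hα hc hℓ₁ hd
    rw [show (fun ξ : EuclideanSpace ℝ (Fin d) =>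
        ‖ξ‖ ^ (ℓ - (d:ℝ)) * Real.exp (-ν * s * ‖ξ‖ ^ α))
      = (fun ξ : EuclideanSpace ℝ (Fin d) =>
        ‖ξ‖ ^ (ℓ - (d:ℝ)) * Real.exp (-(ν * s) * ‖ξ‖ ^ α)) by funext ξ; ring_nf, this,
      Real.mul_rpow hν.le hs.le, hC]
    ring
  have hinnerInt : ∀ s : ℝ, 0 < s →
      Integrable (fun ξ : EuclideanSpace ℝ (Fin d) =>
        ‖ξ‖ ^ (ℓ - (d:ℝ)) * Real.exp (-ν * s * ‖ξ‖ ^ α)) := by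
    intro s hs
    have := aux_inner_integrable d α (ν * s) ℓ hα (mul_pos hν hs) hℓ₁ hd
    refine this.congr ?_
    refine Filter.Eventually.of_forall fun ξ => by ring_nf
  have hmeas : AEStronglyMeasurable
      (fun p : ℝ × EuclideanSpace ℝ (Fin d) =>
        ‖p.2‖ ^ (ℓ - (d:ℝ)) * Real.exp (-ν * p.1 * ‖p.2‖ ^ α))
      ((volume.restrict (Ioo (0:ℝ) t)).prod volume) := by
    apply Measurable.aestronglyMeasurable
    fun_prop
  -- integrability of s ↦ C * s^(-e) on Ioo 0 t
  have hrpowInt : IntegrableOn (fun s : ℝ => C * s ^ (-e)) (Ioo 0 t) := by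
    refine Integrable.const_mul ?_ C
    have : IntervalIntegrable (fun s : ℝ => s ^ (-e)) volume 0 t :=
      intervalIntegral.intervalIntegrable_rpow' (by linarith)
    have h2 := (intervalIntegrable_iff_integrableOn_Ioo_of_le ht.le).1 this
    exact h2
  have hprod : IntegrableOn
      (fun p : ℝ × EuclideanSpace ℝ (Fin d) =>
        ‖p.2‖ ^ (ℓ - (d:ℝ)) * Real.exp (-ν * p.1 * ‖p.2‖ ^ α))
      (Ioo (0 : ℝ) t ×ˢ (univ : Set (EuclideanSpace ℝ (Fin d)))) := by
    rw [IntegrableOn, Measure.volume_eq_prod, ← Measure.prod_restrict, Measure.restrict_univ]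
    refine (integrable_prod_iff hmeas).2 ⟨?_, ?_⟩
    · filter_upwards [ae_restrict_mem measurableSet_Ioo] with s hs
      exact hinnerInt s hs.1
    · refine hrpowInt.congr_fun (fun s hs => ?_) measurableSet_Ioo
      have hnn : (∫ ξ : EuclideanSpace ℝ (Fin d),
          ‖(‖ξ‖ ^ (ℓ - (d:ℝ)) * Real.exp (-ν * s * ‖ξ‖ ^ α))‖)
          = ∫ ξ : EuclideanSpace ℝ (Fin d), ‖ξ‖ ^ (ℓ - (d:ℝ)) * Real.exp (-ν * s * ‖ξ‖ ^ α) :=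
        integral_congr_ae (Filter.Eventually.of_forall fun ξ =>
          Real.norm_of_nonneg (by positivity))
      rw [hnn, hinner s hs.1]
  refine ⟨hprod, ?_⟩
  rw [setIntegral_congr_fun measurableSet_Ioo (fun s hs => hinner s hs.1)]
  rw [← MeasureTheory.integral_Ioc_eq_integral_Ioo, ← intervalIntegral.integral_of_le ht.le,
    intervalIntegral.integral_const_mul, integral_rpow (Or.inl (by linarith)),
    Real.zero_rpow (by linarith : -e + 1 ≠ 0)]
  have hΓd : 0 < Real.Gamma ((d:ℝ)/2) := by
    have h0 : (0:ℝ) < (d:ℝ) := by exact_mod_cast hd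
    exact Real.Gamma_pos_of_pos (by positivity)
  have hνe : (0:ℝ) < ν ^ e := Real.rpow_pos_of_pos hν e
  have hνneg : ν ^ (-e) = (ν ^ e)⁻¹ := Real.rpow_neg hν.le e
  have hte : -e + 1 = 1 - e := by ring
  rw [hte, hC, hνneg]
  have hαℓ : α - ℓ = α * (1 - e) := by rw [he]; field_simp
  rw [hαℓ]
  have h1e : (0:ℝ) < 1 - e := by linarith
  field_simp
  ring
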